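/- (Energy decrement step) Let X be a nonempty finite type, D a distribution on X, g, h : X → [0,1], f : X → [−1,1], and ε > 0, ε' ∈ (0,1]. Suppose h' : X → [0,1] satisfies |h'(x) − clamp(h(x) + ε·f(x))| ≤ ε'/2 for every x ∈ X. Then E_D[(g−h')²] ≤ E_D[(g−h)²] − 2ε·E_D[f·(g−h)] + ε² + 2ε'. -/

import Mathlib

/-- Expectation of `f` under the (finitely supported) distribution `D`. -/
noncomputable def expect {X : Type*} [Fintype X] (D f : X → ℝ) : ℝ := ∑ x, D x * f x

/-- `D` is a probability distribution on the finite type `X`. -/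
def IsDist {X : Type*} [Fintype X] (D : X → ℝ) : Prop := (∀ x, 0 ≤ D x) ∧ ∑ x, D x = 1

/-- Projection of a real number onto the unit interval. -/
noncomputable def clamp (t : ℝ) : ℝ := min 1 (max 0 t)

/-! Pointwise, moving `h` by `ε f` changes `(g - h)²` by `-2ε f (g - h) + ε² f² ≤ -2ε f (g - h) + ε²`;
clamping to `[0, 1]` cannot increase the distance to `g ∈ [0, 1]`; and an `ε'/2`-perturbation inside
`[0, 1]` changes `(g - ·)²` by at most `ε'`. Averaging against `D` gives the bound. -/

lemma clamp_of_mem_Icc {t : ℝ} (ht : t ∈ Set.Icc (0:ℝ) 1) : clamp t = t := by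
  simp [clamp, ht.1, ht.2]

lemma clamp_mem_Icc (t : ℝ) : clamp t ∈ Set.Icc (0:ℝ) 1 :=
  ⟨le_min zero_le_one (le_max_left 0 t), min_le_left 1 _⟩

lemma abs_clamp_sub_clamp_le (s t : ℝ) : |clamp s - clamp t| ≤ |s - t| :=
  calc |clamp s - clamp t| ≤ max |1 - 1| |max 0 s - max 0 t| := abs_min_sub_min_le_max _ _ _ _
    _ = |max s 0 - max t 0| := by simp [max_comm]
    _ ≤ |s - t| := abs_max_sub_max_le_abs _ _ _

lemma sq_sub_clamp_le {a : ℝ} (ha : a ∈ Set.Icc (0:ℝ) 1) (t : ℝ) :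
    (a - clamp t) ^ 2 ≤ (a - t) ^ 2 :=
  calc (a - clamp t) ^ 2 = (clamp a - clamp t) ^ 2 := by rw [clamp_of_mem_Icc ha]
    _ ≤ (a - t) ^ 2 := sq_le_sq.mpr (abs_clamp_sub_clamp_le a t)

lemma sq_sub_le_sq_sub_add_abs {a b c : ℝ} (ha : a ∈ Set.Icc (0:ℝ) 1)
    (hb : b ∈ Set.Icc (0:ℝ) 1) (hc : c ∈ Set.Icc (0:ℝ) 1) :
    (a - b) ^ 2 ≤ (a - c) ^ 2 + 2 * |b - c| := by
  have hsum : |2 * a - b - c| ≤ 2 :=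
    abs_le.mpr ⟨by linarith [ha.1, hb.2, hc.2], by linarith [ha.2, hb.1, hc.1]⟩
  calc (a - b) ^ 2 = (a - c) ^ 2 + (c - b) * (2 * a - b - c) := by ring
    _ ≤ (a - c) ^ 2 + |c - b| * |2 * a - b - c| :=
      (add_le_add_iff_left _).mpr ((le_abs_self _).trans_eq (abs_mul _ _))
    _ ≤ (a - c) ^ 2 + |b - c| * 2 := by
      rw [abs_sub_comm c b]
      gcongr
    _ = (a - c) ^ 2 + 2 * |b - c| := by ring

lemma sq_sub_add_mul_le {f : ℝ} (hf : f ∈ Set.Icc (-1:ℝ) 1) (a b ε : ℝ) :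
    (a - (b + ε * f)) ^ 2 ≤ (a - b) ^ 2 - 2 * ε * (f * (a - b)) + ε ^ 2 := by
  have hf2 : f ^ 2 ≤ 1 := sq_le_one_iff_abs_le_one f |>.mpr (abs_le.mpr hf)
  calc (a - (b + ε * f)) ^ 2 = (a - b) ^ 2 - 2 * ε * (f * (a - b)) + ε ^ 2 * f ^ 2 := by ring
    _ ≤ (a - b) ^ 2 - 2 * ε * (f * (a - b)) + ε ^ 2 * 1 := by gcongr
    _ = (a - b) ^ 2 - 2 * ε * (f * (a - b)) + ε ^ 2 := by ring

lemma sq_sub_le_of_abs_sub_clamp_le {g h f h' ε ε' : ℝ} (hg : g ∈ Set.Icc (0:ℝ) 1)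
    (hf : f ∈ Set.Icc (-1:ℝ) 1) (hh' : h' ∈ Set.Icc (0:ℝ) 1)
    (hclose : |h' - clamp (h + ε * f)| ≤ ε' / 2) :
    (g - h') ^ 2 ≤ (g - h) ^ 2 - 2 * ε * (f * (g - h)) + ε ^ 2 + 2 * ε' := by
  have hε' : 0 ≤ ε' := by linarith [abs_nonneg (h' - clamp (h + ε * f))]
  calc (g - h') ^ 2 ≤ (g - clamp (h + ε * f)) ^ 2 + 2 * |h' - clamp (h + ε * f)| :=
        sq_sub_le_sq_sub_add_abs hg hh' (clamp_mem_Icc _)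
    _ ≤ (g - (h + ε * f)) ^ 2 + 2 * (ε' / 2) :=
        add_le_add (sq_sub_clamp_le hg _) (by gcongr)
    _ ≤ (g - h) ^ 2 - 2 * ε * (f * (g - h)) + ε ^ 2 + 2 * ε' := by
        linarith [sq_sub_add_mul_le hf g h ε]

section expect

variable {X : Type*} [Fintype X] {D : X → ℝ}

lemma expect_mono (hD : ∀ x, 0 ≤ D x) {u v : X → ℝ} (huv : ∀ x, u x ≤ v x) :
    expect D u ≤ expect D v :=
  Finset.sum_le_sum fun x _ => mul_le_mul_of_nonneg_left (huv x) (hD x)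

lemma expect_add (u v : X → ℝ) : expect D (fun x => u x + v x) = expect D u + expect D v := by
  simp only [expect, mul_add, Finset.sum_add_distrib]

lemma expect_sub (u v : X → ℝ) : expect D (fun x => u x - v x) = expect D u - expect D v := by
  simp only [expect, mul_sub, Finset.sum_sub_distrib]

lemma expect_const_mul (c : ℝ) (u : X → ℝ) : expect D (fun x => c * u x) = c * expect D u := by
  simp only [expect, Finset.mul_sum, mul_left_comm]

lemma IsDist.expect_const (hD : IsDist D) (c : ℝ) : expect D (fun _ => c) = c := by
  simp only [expect, ← Finset.sum_mul, hD.2, one_mul]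

end expect

theorem stmt_5_general {X : Type*} [Fintype X]
    (D : X → ℝ) (hD : IsDist D)
    (g h : X → ℝ) (hg : ∀ x, g x ∈ Set.Icc (0:ℝ) 1)
    (f : X → ℝ) (hf : ∀ x, f x ∈ Set.Icc (-1:ℝ) 1)
    (ε ε' : ℝ)
    (h' : X → ℝ) (hh' : ∀ x, h' x ∈ Set.Icc (0:ℝ) 1)
    (hclose : ∀ x, |h' x - clamp (h x + ε * f x)| ≤ ε' / 2) :
    expect D (fun x => (g x - h' x) ^ 2) ≤
      expect D (fun x => (g x - h x) ^ 2)
        - 2 * ε * expect D (fun x => f x * (g x - h x)) + ε ^ 2 + 2 * ε' := by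
  calc expect D (fun x => (g x - h' x) ^ 2)
      ≤ expect D (fun x => (g x - h x) ^ 2 - 2 * ε * (f x * (g x - h x)) + (ε ^ 2 + 2 * ε')) :=
        expect_mono hD.1 fun x => by
          linarith [sq_sub_le_of_abs_sub_clamp_le (hg x) (hf x) (hh' x) (hclose x)]
    _ = _ := by
        rw [expect_add, expect_sub, expect_const_mul, hD.expect_const]
        ring

theorem stmt_5 {X : Type*} [Fintype X] [Nonempty X]
    (D : X → ℝ) (hD : IsDist D)
    (g h : X → ℝ) (hg : ∀ x, g x ∈ Set.Icc (0:ℝ) 1) (hh : ∀ x, h x ∈ Set.Icc (0:ℝ) 1)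
    (f : X → ℝ) (hf : ∀ x, f x ∈ Set.Icc (-1:ℝ) 1)
    (ε ε' : ℝ) (hε : 0 < ε) (hε' : ε' ∈ Set.Ioc (0:ℝ) 1)
    (h' : X → ℝ) (hh' : ∀ x, h' x ∈ Set.Icc (0:ℝ) 1)
    (hclose : ∀ x, |h' x - clamp (h x + ε * f x)| ≤ ε' / 2) :
    expect D (fun x => (g x - h' x) ^ 2) ≤
      expect D (fun x => (g x - h x) ^ 2)
        - 2 * ε * expect D (fun x => f x * (g x - h x)) + ε ^ 2 + 2 * ε' :=
  stmt_5_general D hD g h hg f hf ε ε' h' hh' hclose
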